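/- (Finiteness of the characteristic time.) Suppose ω is a probability vector on S × A with ω_{sa} > 0 for all (s,a), π(a|s) > 0 for all (s,a), ρ is a probability vector on S, and p is a transition kernel with V^π_p(ρ) ≠ 0. Then there exists ε > 0 such that every fully supported transition kernel q with V^π_q(ρ) · V^π_p(ρ) < 0 satisfies Σ_{s,a} ω_{sa} · KL_{sa}(p,q) ≥ ε. -/

import Mathlib

open Finset

noncomputable section

/-- `p` is a transition kernel: `p(·|s,a)` is a probability vector on `S`. -/
def IsKernel {S A : Type*} [Fintype S] (p : S → A → S → ℝ) : Prop :=
  (∀ s a s', 0 ≤ p s a s') ∧ ∀ s a, ∑ s' : S, p s a s' = 1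

/-- `π` is a policy: `π(·|s)` is a probability vector on `A`. -/
def IsPolicy {S A : Type*} [Fintype A] (π : S → A → ℝ) : Prop :=
  (∀ s a, 0 ≤ π s a) ∧ ∀ s, ∑ a : A, π s a = 1

/-- The row-stochastic matrix `P_{p,π}(s,s') = Σ_a π(a|s) p(s'|s,a)`. -/
def Pmat {S A : Type*} [Fintype A] (π : S → A → ℝ) (p : S → A → S → ℝ) :
    Matrix S S ℝ :=
  fun s s' => ∑ a : A, π s a * p s a s'

/-- `r^π(s) = Σ_a π(a|s) r(s,a)`. -/
def rpi {S A : Type*} [Fintype A] (π : S → A → ℝ) (r : S → A → ℝ) (s : S) : ℝ :=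
  ∑ a : A, π s a * r s a

/-- The value function `V^π_p(s) = Σ_t γ^t ((P_{p,π})^t r^π)(s)`. -/
def Vval {S A : Type*} [Fintype S] [DecidableEq S] [Fintype A]
    (γ : ℝ) (π : S → A → ℝ) (r : S → A → ℝ) (p : S → A → S → ℝ) (s : S) : ℝ :=
  ∑' t : ℕ, γ ^ t * ((Pmat π p ^ t).mulVec (fun s' => rpi π r s')) s

/-- The Q-function `Q^π_p(s,a) = r(s,a) + γ Σ_{s'} p(s'|s,a) V^π_p(s')`. -/
def Qval {S A : Type*} [Fintype S] [DecidableEq S] [Fintype A]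
    (γ : ℝ) (π : S → A → ℝ) (r : S → A → ℝ) (p : S → A → S → ℝ) (s : S) (a : A) : ℝ :=
  r s a + γ * ∑ s' : S, p s a s' * Vval γ π r p s'

/-- The matrix `M_{p,π}((s,a),(s',a')) = p(s'|s,a) π(a'|s')` on `S × A`. -/
def Mmat {S A : Type*} (π : S → A → ℝ) (p : S → A → S → ℝ) :
    Matrix (S × A) (S × A) ℝ :=
  fun sa s'a' => p sa.1 sa.2 s'a'.1 * π s'a'.1 s'a'.2

/-- The discounted visitation distribution
`d^π_{p,s,a}(s',a') = (1−γ) Σ_t γ^t ((M_{p,π})^t)_{(s,a),(s',a')}`. -/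
def dvis {S A : Type*} [Fintype S] [DecidableEq S] [Fintype A] [DecidableEq A]
    (γ : ℝ) (π : S → A → ℝ) (p : S → A → S → ℝ) (x y : S × A) : ℝ :=
  (1 - γ) * ∑' t : ℕ, γ ^ t * (Mmat π p ^ t) x y

/-- `d^π_{p,ρ}(s,a) = Σ_{(s₀,a₀)} ρ_{s₀} π(a₀|s₀) d^π_{p,s₀,a₀}(s,a)`. -/
def drho {S A : Type*} [Fintype S] [DecidableEq S] [Fintype A] [DecidableEq A]
    (γ : ℝ) (π : S → A → ℝ) (p : S → A → S → ℝ) (ρ : S → ℝ) (y : S × A) : ℝ :=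
  ∑ x : S × A, ρ x.1 * π x.1 x.2 * dvis γ π p x y

/-- `KL_{sa}(p,q) = Σ_{s'} p(s'|s,a) log(p(s'|s,a)/q(s'|s,a))`
(with the convention `0 log 0 = 0`, automatic since `Real.log 0 = 0`). -/
def KLsa {S A : Type*} [Fintype S] (p q : S → A → S → ℝ) (s : S) (a : A) : ℝ :=
  ∑ s' : S, p s a s' * Real.log (p s a s' / q s a s')

end

/-!
For a confusing kernel `q` the values `V^π_q(ρ)` and `V^π_p(ρ)` have opposite signs, so they
differ by at least `|V^π_p(ρ)|`. On the other hand `q ↦ V^π_q(ρ)` is Lipschitz in the row-`ℓ¹`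
distance of the transition matrices (telescoping gives `‖P^t - Q^t‖ ≤ t ‖P - Q‖`, and
`∑ t γ^t = γ / (1 - γ)²`), and that distance is controlled by the weighted KL divergence through
a Pinsker-type inequality, since every weight `ω_{sa}` is at least `min ω > 0`.
-/

lemma abs_sum_mul_sub_sum_mul_le {ι : Type*} [Fintype ι] {ρ f g : ι → ℝ} {c : ℝ}
    (hρ0 : ∀ i, 0 ≤ ρ i) (hρ1 : ∑ i, ρ i = 1) (h : ∀ i, |f i - g i| ≤ c) :
    |∑ i, ρ i * f i - ∑ i, ρ i * g i| ≤ c := by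
  rw [← sum_sub_distrib]
  calc |∑ i, (ρ i * f i - ρ i * g i)| ≤ ∑ i, ρ i * |f i - g i| :=
        (abs_sum_le_sum_abs _ _).trans_eq <| sum_congr rfl fun i _ => by
          rw [← mul_sub, abs_mul, abs_of_nonneg (hρ0 i)]
    _ ≤ ∑ i, ρ i * c := by gcongr with i; exacts [hρ0 i, h i]
    _ = c := by rw [← sum_mul, hρ1, one_mul]

lemma abs_le_abs_sub_of_mul_neg {x y : ℝ} (h : x * y < 0) : |y| ≤ |x - y| := by
  rcases mul_neg_iff.1 h with ⟨hx, hy⟩ | ⟨hx, hy⟩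
  · rw [abs_of_neg hy, abs_of_pos (by linarith)]; linarith
  · rw [abs_of_pos hy, abs_of_neg (by linarith)]; linarith

lemma two_mul_sub_two_sqrt_mul_le_mul_log {x y : ℝ} (hx : 0 ≤ x) (hy : 0 < y) :
    2 * x - 2 * √(x * y) ≤ x * Real.log (x / y) := by
  rcases hx.eq_or_lt with rfl | hx
  · simp
  -- `log t = 2 log √t ≤ 2 (√t - 1)` at `t = y / x`
  have hlog : Real.log (y / x) ≤ 2 * (√(y / x) - 1) := by
    have := Real.log_le_sub_one_of_pos (Real.sqrt_pos.2 (div_pos hy hx))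
    rw [Real.log_sqrt (div_pos hy hx).le] at this
    linarith
  have hsqrt : x * √(y / x) = √(x * y) := by
    rw [← Real.sqrt_sq hx.le, ← Real.sqrt_mul (sq_nonneg x), Real.sqrt_sq hx.le]
    congr 1
    field_simp
  rw [← inv_div, Real.log_inv]
  nlinarith

lemma sq_sum_abs_sub_le_four_mul_sum_mul_log {ι : Type*} [Fintype ι] {p q : ι → ℝ}
    (hp0 : ∀ i, 0 ≤ p i) (hp1 : ∑ i, p i = 1) (hq0 : ∀ i, 0 < q i) (hq1 : ∑ i, q i = 1) :
    (∑ i, |p i - q i|) ^ 2 ≤ 4 * ∑ i, p i * Real.log (p i / q i) := by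
  -- `|p - q| = |√p - √q| (√p + √q)`; Cauchy–Schwarz splits this into the squared Hellinger
  -- distance, which is at most the KL divergence, and `∑ (√p + √q)² ≤ 4`.
  have hsq : ∀ i, √(p i * q i) = √(p i) * √(q i) := fun i => Real.sqrt_mul (hp0 i) _
  have hp : ∀ i, √(p i) ^ 2 = p i := fun i => Real.sq_sqrt (hp0 i)
  have hq : ∀ i, √(q i) ^ 2 = q i := fun i => Real.sq_sqrt (hq0 i).le
  have hHel : ∑ i, (√(p i) - √(q i)) ^ 2 ≤ ∑ i, p i * Real.log (p i / q i) :=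
    calc ∑ i, (√(p i) - √(q i)) ^ 2
          = ∑ i, (2 * p i - 2 * √(p i * q i)) + (∑ i, q i - ∑ i, p i) := by
          rw [← sum_sub_distrib, ← sum_add_distrib]
          exact sum_congr rfl fun i _ => by rw [hsq]; linear_combination hp i + hq i
      _ = ∑ i, (2 * p i - 2 * √(p i * q i)) := by rw [hp1, hq1, sub_self, add_zero]
      _ ≤ _ := sum_le_sum fun i _ => two_mul_sub_two_sqrt_mul_le_mul_log (hp0 i) (hq0 i)
  have hsum : ∑ i, (√(p i) + √(q i)) ^ 2 ≤ 4 :=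
    calc ∑ i, (√(p i) + √(q i)) ^ 2 ≤ ∑ i, (2 * p i + 2 * q i) :=
          sum_le_sum fun i _ => by nlinarith [hp i, hq i, sq_nonneg (√(p i) - √(q i))]
      _ = 4 := by rw [sum_add_distrib, ← mul_sum, ← mul_sum, hp1, hq1]; norm_num
  calc (∑ i, |p i - q i|) ^ 2 = (∑ i, |√(p i) - √(q i)| * (√(p i) + √(q i))) ^ 2 := by
        congr 1
        refine sum_congr rfl fun i _ => ?_
        rw [← abs_of_nonneg (by positivity : 0 ≤ √(p i) + √(q i)), ← abs_mul]
        congr 1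
        linear_combination hq i - hp i
    _ ≤ (∑ i, |√(p i) - √(q i)| ^ 2) * ∑ i, (√(p i) + √(q i)) ^ 2 :=
        sum_mul_sq_le_sq_mul_sq _ _ _
    _ ≤ (∑ i, p i * Real.log (p i / q i)) * 4 := by
        simp only [sq_abs]
        exact mul_le_mul hHel hsum (sum_nonneg fun i _ => sq_nonneg _)
          ((sum_nonneg fun i _ => sq_nonneg _).trans hHel)
    _ = 4 * ∑ i, p i * Real.log (p i / q i) := mul_comm _ _

lemma norm_pow_sub_pow_le_of_norm_le_one {R : Type*} [SeminormedRing R] [NormOneClass R] {a b : R}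
    (ha : ‖a‖ ≤ 1) (hb : ‖b‖ ≤ 1) (t : ℕ) : ‖a ^ t - b ^ t‖ ≤ t * ‖a - b‖ := by
  induction t with
  | zero => simp
  | succ t ih =>
    have hbt : ‖b ^ t‖ ≤ 1 := (norm_pow_le b t).trans (pow_le_one₀ (norm_nonneg b) hb)
    calc ‖a ^ (t + 1) - b ^ (t + 1)‖ = ‖a * (a ^ t - b ^ t) + (a - b) * b ^ t‖ := by
          rw [pow_succ', pow_succ']; noncomm_ring
      _ ≤ ‖a‖ * ‖a ^ t - b ^ t‖ + ‖a - b‖ * ‖b ^ t‖ :=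
          (norm_add_le _ _).trans (add_le_add (norm_mul_le _ _) (norm_mul_le _ _))
      _ ≤ 1 * (t * ‖a - b‖) + ‖a - b‖ * 1 := by gcongr
      _ = (t + 1 : ℕ) * ‖a - b‖ := by push_cast; ring

attribute [local instance] Matrix.linftyOpNormedAddCommGroup Matrix.linftyOpNormedRing

namespace Matrix

lemma linfty_opNorm_le_of_forall_sum_abs_le {m n : Type*} [Fintype m] [Fintype n]
    {A : Matrix m n ℝ} {δ : ℝ} (hδ : 0 ≤ δ) (h : ∀ i, ∑ j, |A i j| ≤ δ) : ‖A‖ ≤ δ := by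
  rw [linfty_opNorm_def, ← Real.coe_toNNReal δ hδ, NNReal.coe_le_coe, Finset.sup_le_iff]
  intro i _
  rw [← NNReal.coe_le_coe, NNReal.coe_sum, Real.coe_toNNReal δ hδ]
  simpa only [coe_nnnorm, Real.norm_eq_abs] using h i

lemma abs_mulVec_apply_le {m n : Type*} [Fintype m] [Fintype n] (A : Matrix m n ℝ) (v : n → ℝ) (i : m) :
    |(A *ᵥ v) i| ≤ ‖A‖ * ‖v‖ :=
  (norm_le_pi_norm (A *ᵥ v) i).trans (linfty_opNorm_mulVec A v)

variable {n : Type*} [Fintype n] [DecidableEq n]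

lemma linfty_opNorm_le_one_of_mem_rowStochastic {M : Matrix n n ℝ}
    (hM : M ∈ rowStochastic ℝ n) : ‖M‖ ≤ 1 :=
  linfty_opNorm_le_of_forall_sum_abs_le zero_le_one fun i => by
    simp only [abs_of_nonneg (nonneg_of_mem_rowStochastic hM), sum_row_of_mem_rowStochastic hM i,
      le_refl]

variable [Nonempty n] {γ : ℝ}

lemma summable_geometric_mul_mulVec_apply {P : Matrix n n ℝ} (hP : ‖P‖ ≤ 1) (hγ0 : 0 ≤ γ)
    (hγ1 : γ < 1) (v : n → ℝ) (i : n) : Summable fun t : ℕ => γ ^ t * (P ^ t *ᵥ v) i := by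
  refine .of_norm_bounded ((summable_geometric_of_lt_one hγ0 hγ1).mul_right ‖v‖) fun t => ?_
  rw [norm_mul, norm_pow, Real.norm_of_nonneg hγ0, Real.norm_eq_abs]
  gcongr
  calc |(P ^ t *ᵥ v) i| ≤ ‖P ^ t‖ * ‖v‖ := abs_mulVec_apply_le _ v i
    _ ≤ 1 * ‖v‖ := by
      gcongr
      exact (norm_pow_le P t).trans (pow_le_one₀ (norm_nonneg P) hP)
    _ = ‖v‖ := one_mul _

lemma abs_tsum_geometric_mul_mulVec_sub_le {P Q : Matrix n n ℝ} (hP : ‖P‖ ≤ 1) (hQ : ‖Q‖ ≤ 1)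
    (hγ0 : 0 ≤ γ) (hγ1 : γ < 1) (v : n → ℝ) (i : n) :
    |∑' t : ℕ, γ ^ t * (P ^ t *ᵥ v) i - ∑' t : ℕ, γ ^ t * (Q ^ t *ᵥ v) i|
      ≤ γ / (1 - γ) ^ 2 * ‖v‖ * ‖P - Q‖ := by
  rw [← (summable_geometric_mul_mulVec_apply hP hγ0 hγ1 v i).tsum_sub
    (summable_geometric_mul_mulVec_apply hQ hγ0 hγ1 v i), ← Real.norm_eq_abs]
  have hγ : ‖γ‖ < 1 := by rwa [Real.norm_of_nonneg hγ0]
  refine (tsum_of_norm_bounded ((hasSum_coe_mul_geometric_of_norm_lt_one hγ).mul_right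
    (‖v‖ * ‖P - Q‖)) fun t => ?_).trans_eq (mul_assoc _ _ _).symm
  rw [← mul_sub, ← Pi.sub_apply, ← sub_mulVec, norm_mul, norm_pow, Real.norm_of_nonneg hγ0,
    Real.norm_eq_abs]
  calc γ ^ t * |((P ^ t - Q ^ t) *ᵥ v) i| ≤ γ ^ t * (‖P ^ t - Q ^ t‖ * ‖v‖) := by
        gcongr; exact abs_mulVec_apply_le _ v i
    _ ≤ γ ^ t * (t * ‖P - Q‖ * ‖v‖) := by gcongr; exact norm_pow_sub_pow_le_of_norm_le_one hP hQ t
    _ = t * γ ^ t * (‖v‖ * ‖P - Q‖) := by ring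

end Matrix

section MDP

variable {S A : Type*} [Fintype S] [DecidableEq S] [Fintype A] {π : S → A → ℝ}
  {p q : S → A → S → ℝ}

lemma Pmat_mem_rowStochastic (hπ : IsPolicy π) (hp : IsKernel p) :
    Pmat π p ∈ Matrix.rowStochastic ℝ S := by
  refine Matrix.mem_rowStochastic_iff_sum.2 ⟨fun s s' => sum_nonneg fun a _ =>
    mul_nonneg (hπ.1 s a) (hp.1 s a s'), fun s => ?_⟩
  simp only [Pmat]
  rw [sum_comm]
  simp only [← mul_sum, hp.2, mul_one, hπ.2]

lemma norm_Pmat_sub_Pmat_le (hπ : IsPolicy π) {δ : ℝ} (hδ : 0 ≤ δ)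
    (h : ∀ s a, ∑ s', |q s a s' - p s a s'| ≤ δ) : ‖Pmat π q - Pmat π p‖ ≤ δ := by
  refine Matrix.linfty_opNorm_le_of_forall_sum_abs_le hδ fun s => ?_
  calc ∑ s', |∑ a, π s a * q s a s' - ∑ a, π s a * p s a s'|
      ≤ ∑ s', ∑ a, π s a * |q s a s' - p s a s'| := by
        gcongr with s'
        rw [← sum_sub_distrib]
        refine (abs_sum_le_sum_abs _ _).trans_eq (sum_congr rfl fun a _ => ?_)
        rw [← mul_sub, abs_mul, abs_of_nonneg (hπ.1 s a)]
    _ = ∑ a, π s a * ∑ s', |q s a s' - p s a s'| := by rw [sum_comm]; simp only [mul_sum]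
    _ ≤ ∑ a, π s a * δ := by gcongr with a; exacts [hπ.1 s a, h s a]
    _ = δ := by rw [← sum_mul, hπ.2 s, one_mul]

lemma abs_Vval_sub_Vval_le [Nonempty S] {γ : ℝ} (hγ0 : 0 ≤ γ) (hγ1 : γ < 1)
    (hπ : IsPolicy π) (hp : IsKernel p) (hq : IsKernel q) (r : S → A → ℝ) (s : S) :
    |Vval γ π r q s - Vval γ π r p s| ≤ γ / (1 - γ) ^ 2 * ‖rpi π r‖ * ‖Pmat π q - Pmat π p‖ :=
  Matrix.abs_tsum_geometric_mul_mulVec_sub_le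
    (Matrix.linfty_opNorm_le_one_of_mem_rowStochastic (Pmat_mem_rowStochastic hπ hq))
    (Matrix.linfty_opNorm_le_one_of_mem_rowStochastic (Pmat_mem_rowStochastic hπ hp))
    hγ0 hγ1 (rpi π r) s

lemma mul_norm_Pmat_sub_Pmat_sq_le (hπ : IsPolicy π) (hp : IsKernel p) (hq : IsKernel q)
    (hqpos : ∀ s a s', 0 < q s a s') {ω : S × A → ℝ} {m : ℝ} (hm : 0 < m)
    (hmω : ∀ sa, m ≤ ω sa) :
    m * ‖Pmat π q - Pmat π p‖ ^ 2 ≤ 4 * ∑ sa : S × A, ω sa * KLsa p q sa.1 sa.2 := by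
  set K := ∑ sa : S × A, ω sa * KLsa p q sa.1 sa.2
  have hpinsker : ∀ s a, (∑ s', |q s a s' - p s a s'|) ^ 2 ≤ 4 * KLsa p q s a := fun s a => by
    simp only [abs_sub_comm (q s a _)]
    exact sq_sum_abs_sub_le_four_mul_sum_mul_log (fun s' => hp.1 s a s') (hp.2 s a)
      (fun s' => hqpos s a s') (hq.2 s a)
  have hKL0 : ∀ s a, 0 ≤ KLsa p q s a := fun s a => by
    linarith [hpinsker s a, sq_nonneg (∑ s', |q s a s' - p s a s'|)]
  have hterm0 : ∀ sa : S × A, 0 ≤ ω sa * KLsa p q sa.1 sa.2 := fun sa =>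
    mul_nonneg (hm.le.trans (hmω sa)) (hKL0 _ _)
  have hKL : ∀ s a, m * KLsa p q s a ≤ K := fun s a =>
    calc m * KLsa p q s a ≤ ω (s, a) * KLsa p q s a := by gcongr; exacts [hKL0 s a, hmω _]
      _ ≤ K := single_le_sum (fun sa _ => hterm0 sa) (mem_univ (s, a))
  have hK0 : 0 ≤ 4 * K / m := by have : 0 ≤ K := sum_nonneg fun sa _ => hterm0 sa; positivity
  have hrow : ∀ s a, ∑ s', |q s a s' - p s a s'| ≤ √(4 * K / m) := fun s a =>
    (Real.le_sqrt (sum_nonneg fun _ _ => abs_nonneg _) hK0).2 <| (hpinsker s a).trans <| by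
      rw [le_div_iff₀ hm]; linarith [hKL s a]
  have := (Real.le_sqrt (norm_nonneg _) hK0).1 (norm_Pmat_sub_Pmat_le hπ (Real.sqrt_nonneg _) hrow)
  rwa [le_div_iff₀ hm, mul_comm] at this

end MDP

theorem stmt10_general {S A : Type*} [Fintype S] [DecidableEq S] [Fintype A]
    [Nonempty S] [Nonempty A]
    (γ : ℝ) (hγ : γ ∈ Set.Ioo (0 : ℝ) 1) (r : S → A → ℝ)
    (π : S → A → ℝ) (hπ : IsPolicy π)
    (ω : S × A → ℝ) (hωpos : ∀ sa, 0 < ω sa)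
    (ρ : S → ℝ) (hρ0 : ∀ s, 0 ≤ ρ s) (hρ1 : ∑ s : S, ρ s = 1)
    (p : S → A → S → ℝ) (hp : IsKernel p)
    (hV : ∑ s : S, ρ s * Vval γ π r p s ≠ 0) :
    ∃ ε > 0, ∀ q : S → A → S → ℝ, IsKernel q → (∀ s a s', 0 < q s a s') →
      (∑ s : S, ρ s * Vval γ π r q s) * (∑ s : S, ρ s * Vval γ π r p s) < 0 →
      ε ≤ ∑ sa : S × A, ω sa * KLsa p q sa.1 sa.2 := by
  obtain ⟨hγ0, hγ1⟩ := hγ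
  set c := γ / (1 - γ) ^ 2 * ‖rpi π r‖
  set m := univ.inf' univ_nonempty ω
  have hm : 0 < m := (lt_inf'_iff _).2 fun sa _ => hωpos sa
  set v := |∑ s : S, ρ s * Vval γ π r p s|
  have hv : 0 < v := abs_pos.2 hV
  refine ⟨m * v ^ 2 / (4 * (c ^ 2 + 1)), by positivity, fun q hq hqpos hconf => ?_⟩
  set δ := ‖Pmat π q - Pmat π p‖
  have hvδ : v ≤ c * δ := (abs_le_abs_sub_of_mul_neg hconf).trans <|
    abs_sum_mul_sub_sum_mul_le hρ0 hρ1 fun s => abs_Vval_sub_Vval_le hγ0.le hγ1 hπ hp hq r s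
  have hδK := mul_norm_Pmat_sub_Pmat_sq_le hπ hp hq hqpos hm fun sa => inf'_le ω (mem_univ sa)
  rw [div_le_iff₀ (by positivity)]
  calc m * v ^ 2 ≤ m * (c * δ) ^ 2 := by gcongr
    _ = c ^ 2 * (m * δ ^ 2) := by ring
    _ ≤ c ^ 2 * (4 * ∑ sa : S × A, ω sa * KLsa p q sa.1 sa.2) := by gcongr
    _ ≤ _ := by nlinarith [mul_nonneg hm.le (sq_nonneg δ)]

/-- Finiteness of the characteristic time: the weighted KL divergence to the set
of fully supported confusing kernels is bounded away from `0`. -/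
theorem stmt10 {S A : Type*} [Fintype S] [DecidableEq S] [Fintype A] [DecidableEq A]
    [Nonempty S] [Nonempty A]
    (γ : ℝ) (hγ : γ ∈ Set.Ioo (0 : ℝ) 1) (r : S → A → ℝ)
    (π : S → A → ℝ) (hπ : IsPolicy π) (hπpos : ∀ s a, 0 < π s a)
    (ω : S × A → ℝ) (hω1 : ∑ sa : S × A, ω sa = 1) (hωpos : ∀ sa, 0 < ω sa)
    (ρ : S → ℝ) (hρ0 : ∀ s, 0 ≤ ρ s) (hρ1 : ∑ s : S, ρ s = 1)
    (p : S → A → S → ℝ) (hp : IsKernel p)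
    (hV : ∑ s : S, ρ s * Vval γ π r p s ≠ 0) :
    ∃ ε > 0, ∀ q : S → A → S → ℝ, IsKernel q → (∀ s a s', 0 < q s a s') →
      (∑ s : S, ρ s * Vval γ π r q s) * (∑ s : S, ρ s * Vval γ π r p s) < 0 →
      ε ≤ ∑ sa : S × A, ω sa * KLsa p q sa.1 sa.2 :=
  stmt10_general γ hγ r π hπ ω hωpos ρ hρ0 hρ1 p hp hV
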